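/- Let C₋, C₊ ∈ ℂ^{m×n}, Ω₋ ∈ ℂ^{n×n} Hermitian, Ω₊ = 0, and suppose C₋·C₊ᵀ is symmetric (C₋C₊ᵀ = C₊C₋ᵀ), C₋·Ω₋ = 0, and C₊·Ω₋ᵀ = 0 (the QND-interaction condition [L,H] = 0 with Ω₊ = 0). Put K = C₋C₋† − C₊C₊† and K' = conj(C₋)C₋ᵀ − conj(C₊)C₊ᵀ. Then for every s ∈ ℂ such that sI_{2n} − 𝒜, sI_m + (1/2)K, and sI_m + (1/2)K' are invertible, the annihilation–creation form transfer matrix is block diagonal: Ξ[s] = diag( (sI_m − (1/2)K)(sI_m + (1/2)K)⁻¹ , (sI_m − (1/2)K')(sI_m + (1/2)K')⁻¹ ); consequently quantum BAE measurements are realized. -/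
import Mathlib

open Matrix

noncomputable section

namespace LQS

/-- Entrywise complex conjugation of a matrix. -/
def conjMat {k l : ℕ} (X : Matrix (Fin k) (Fin l) ℂ) : Matrix (Fin k) (Fin l) ℂ :=
  X.map (starRingEnd ℂ)

/-- Doubled-up matrix Δ(U,V) = [[U, V],[conj V, conj U]]. -/
def deltaUp {k r : ℕ} (U V : Matrix (Fin k) (Fin r) ℂ) :
    Matrix (Fin k ⊕ Fin k) (Fin r ⊕ Fin r) ℂ :=
  fromBlocks U V (conjMat V) (conjMat U)

/-- J_k = diag(I_k, −I_k). -/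
def Jdiag (k : ℕ) : Matrix (Fin k ⊕ Fin k) (Fin k ⊕ Fin k) ℂ :=
  fromBlocks 1 0 0 (-1)

/-- 𝒞♭ = J_n·𝒞†·J_m for 𝒞 = Δ(C₋,C₊). -/
def flatC {m n : ℕ} (Cm Cp : Matrix (Fin m) (Fin n) ℂ) :
    Matrix (Fin n ⊕ Fin n) (Fin m ⊕ Fin m) ℂ :=
  Jdiag n * (deltaUp Cm Cp)ᴴ * Jdiag m

/-- 𝒜 = −i·J_n·Ω − (1/2)·𝒞♭·𝒞. -/
def calA {m n : ℕ} (Cm Cp : Matrix (Fin m) (Fin n) ℂ) (Om Op : Matrix (Fin n) (Fin n) ℂ) :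
    Matrix (Fin n ⊕ Fin n) (Fin n ⊕ Fin n) ℂ :=
  (-Complex.I) • (Jdiag n * deltaUp Om Op) - (1/2 : ℂ) • (flatC Cm Cp * deltaUp Cm Cp)

/-- Annihilation–creation form transfer matrix Ξ[s] = I − 𝒞(sI − 𝒜)⁻¹𝒞♭
(identity scattering matrix). -/
def Xi {m n : ℕ} (Cm Cp : Matrix (Fin m) (Fin n) ℂ) (Om Op : Matrix (Fin n) (Fin n) ℂ)
    (s : ℂ) : Matrix (Fin m ⊕ Fin m) (Fin m ⊕ Fin m) ℂ :=
  1 - deltaUp Cm Cp *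
    (s • (1 : Matrix (Fin n ⊕ Fin n) (Fin n ⊕ Fin n) ℂ) - calA Cm Cp Om Op)⁻¹ *
    flatC Cm Cp

end LQS

open LQS Matrix

namespace LQSAux

lemma conjMat_mul {k l p : ℕ} (X : Matrix (Fin k) (Fin l) ℂ) (Y : Matrix (Fin l) (Fin p) ℂ) :
    conjMat (X * Y) = conjMat X * conjMat Y :=
  Matrix.map_mul

lemma conjMat_zero {k l : ℕ} : conjMat (0 : Matrix (Fin k) (Fin l) ℂ) = 0 := by
  ext i j; simp [conjMat]

lemma conjMat_ct {k l : ℕ} (X : Matrix (Fin k) (Fin l) ℂ) : (conjMat X)ᴴ = Xᵀ := by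
  ext i j; simp [conjMat, conjTranspose_apply]

lemma conjMat_transpose {k l : ℕ} (X : Matrix (Fin k) (Fin l) ℂ) :
    conjMat Xᵀ = (conjMat X)ᵀ := by
  ext i j; simp [conjMat]

lemma ct_eq {k l : ℕ} (X : Matrix (Fin k) (Fin l) ℂ) : Xᴴ = (conjMat X)ᵀ := by
  ext i j; simp [conjMat, conjTranspose_apply]

lemma conjMat_conjMat {k l : ℕ} (X : Matrix (Fin k) (Fin l) ℂ) :
    conjMat (conjMat X) = X := by
  ext i j; simp [conjMat]

lemma fromBlocks_sub' {k l p q : ℕ} (A E : Matrix (Fin k) (Fin l) ℂ)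
    (B F : Matrix (Fin k) (Fin p) ℂ) (C G : Matrix (Fin q) (Fin l) ℂ)
    (D H : Matrix (Fin q) (Fin p) ℂ) :
    fromBlocks A B C D - fromBlocks E F G H = fromBlocks (A - E) (B - F) (C - G) (D - H) := by
  rw [sub_eq_add_neg, Matrix.fromBlocks_neg, Matrix.fromBlocks_add]
  simp [sub_eq_add_neg]

end LQSAux

open LQSAux

/-- QND interaction with Ω₊ = 0 and C₋C₊ᵀ symmetric: the annihilation–creation
transfer matrix is block diagonal with explicit all-pass diagonal blocks. -/
theorem stmt_13 {m n : ℕ} (hm : 1 ≤ m) (hn : 1 ≤ n)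
    (Cm Cp : Matrix (Fin m) (Fin n) ℂ)
    (Om : Matrix (Fin n) (Fin n) ℂ)
    (hOmH : Omᴴ = Om)
    (hSym : Cm * Cpᵀ = Cp * Cmᵀ)
    (h1 : Cm * Om = 0) (h2 : Cp * Omᵀ = 0) :
    ∀ s : ℂ,
      IsUnit (s • (1 : Matrix (Fin n ⊕ Fin n) (Fin n ⊕ Fin n) ℂ)
        - calA Cm Cp Om (0 : Matrix (Fin n) (Fin n) ℂ)) →
      IsUnit (s • (1 : Matrix (Fin m) (Fin m) ℂ) + (1/2 : ℂ) • (Cm * Cmᴴ - Cp * Cpᴴ)) →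
      IsUnit (s • (1 : Matrix (Fin m) (Fin m) ℂ)
        + (1/2 : ℂ) • (conjMat Cm * Cmᵀ - conjMat Cp * Cpᵀ)) →
      Xi Cm Cp Om (0 : Matrix (Fin n) (Fin n) ℂ) s =
        fromBlocks
          ((s • (1 : Matrix (Fin m) (Fin m) ℂ) - (1/2 : ℂ) • (Cm * Cmᴴ - Cp * Cpᴴ)) *
            (s • (1 : Matrix (Fin m) (Fin m) ℂ) + (1/2 : ℂ) • (Cm * Cmᴴ - Cp * Cpᴴ))⁻¹)
          0 0
          ((s • (1 : Matrix (Fin m) (Fin m) ℂ)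
              - (1/2 : ℂ) • (conjMat Cm * Cmᵀ - conjMat Cp * Cpᵀ)) *
            (s • (1 : Matrix (Fin m) (Fin m) ℂ)
              + (1/2 : ℂ) • (conjMat Cm * Cmᵀ - conjMat Cp * Cpᵀ))⁻¹) := by
  intro s hN hP hP'
  -- notation
  set K : Matrix (Fin m) (Fin m) ℂ := Cm * Cmᴴ - Cp * Cpᴴ with hKdef
  set K' : Matrix (Fin m) (Fin m) ℂ := conjMat Cm * Cmᵀ - conjMat Cp * Cpᵀ with hK'def
  set C : Matrix (Fin m ⊕ Fin m) (Fin n ⊕ Fin n) ℂ := deltaUp Cm Cp with hCdef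
  set Cf : Matrix (Fin n ⊕ Fin n) (Fin m ⊕ Fin m) ℂ := flatC Cm Cp with hCfdef
  set N : Matrix (Fin n ⊕ Fin n) (Fin n ⊕ Fin n) ℂ :=
    s • (1 : Matrix (Fin n ⊕ Fin n) (Fin n ⊕ Fin n) ℂ)
      - calA Cm Cp Om (0 : Matrix (Fin n) (Fin n) ℂ) with hNdef
  set P : Matrix (Fin m) (Fin m) ℂ := s • (1 : Matrix (Fin m) (Fin m) ℂ) + (1/2 : ℂ) • K
    with hPdef
  set P' : Matrix (Fin m) (Fin m) ℂ := s • (1 : Matrix (Fin m) (Fin m) ℂ) + (1/2 : ℂ) • K'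
    with hP'def
  set Kb : Matrix (Fin m ⊕ Fin m) (Fin m ⊕ Fin m) ℂ := fromBlocks K 0 0 K' with hKbdef
  set Q : Matrix (Fin m ⊕ Fin m) (Fin m ⊕ Fin m) ℂ := fromBlocks P 0 0 P' with hQdef
  -- conjugated hypotheses
  have hOmT : conjMat Om = Omᵀ := by
    ext i j
    have := congrFun (congrFun hOmH j) i
    simpa [conjMat, conjTranspose_apply] using this
  have h1' : conjMat Cm * conjMat Om = 0 := by
    rw [← conjMat_mul, h1, conjMat_zero]
  have h2' : conjMat Cp * Om = 0 := by
    have := conjMat_mul Cp Omᵀ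
    rw [h2, conjMat_zero] at this
    rw [conjMat_transpose, hOmT] at this
    simpa using this.symm
  have hCpOm : Cp * conjMat Om = 0 := by rw [hOmT]; exact h2
  have hSym' : conjMat Cm * Cpᴴ = conjMat Cp * Cmᴴ := by
    have := congrArg conjMat hSym
    rw [conjMat_mul, conjMat_mul, conjMat_transpose, conjMat_transpose] at this
    rw [ct_eq Cp, ct_eq Cm]
    exact this
  -- flatC as blocks
  have hCf : Cf = fromBlocks Cmᴴ (-Cpᵀ) (-Cpᴴ) Cmᵀ := by
    rw [hCfdef]
    unfold flatC Jdiag deltaUp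
    rw [fromBlocks_conjTranspose, fromBlocks_multiply, fromBlocks_multiply]
    simp [conjMat_ct]
  -- C * (J Ω) = 0
  have hCJΩ : C * (Jdiag n * deltaUp Om (0 : Matrix (Fin n) (Fin n) ℂ)) = 0 := by
    rw [hCdef]
    unfold Jdiag deltaUp
    rw [fromBlocks_multiply, fromBlocks_multiply]
    simp [conjMat_zero, h1, h1', h2', hCpOm]
  -- C * Cf = Kb
  have hCCf : C * Cf = Kb := by
    rw [hCdef, hCf, hKbdef]
    unfold deltaUp
    rw [fromBlocks_multiply]
    have e1 : Cm * Cmᴴ + Cp * -Cpᴴ = Cm * Cmᴴ - Cp * Cpᴴ := by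
      rw [Matrix.mul_neg, ← sub_eq_add_neg]
    have e2 : Cm * -Cpᵀ + Cp * Cmᵀ = (0 : Matrix (Fin m) (Fin m) ℂ) := by
      rw [Matrix.mul_neg, hSym]; simp
    have e3 : conjMat Cp * Cmᴴ + conjMat Cm * -Cpᴴ = (0 : Matrix (Fin m) (Fin m) ℂ) := by
      rw [Matrix.mul_neg, ← hSym']; simp
    have e4 : conjMat Cp * -Cpᵀ + conjMat Cm * Cmᵀ = conjMat Cm * Cmᵀ - conjMat Cp * Cpᵀ := by
      rw [Matrix.mul_neg, neg_add_eq_sub]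
    rw [e1, e2, e3, e4]
  -- Q as smul expression
  have hQsmul : Q = s • (1 : Matrix (Fin m ⊕ Fin m) (Fin m ⊕ Fin m) ℂ) + (1/2 : ℂ) • Kb := by
    rw [hQdef, hKbdef, ← fromBlocks_one, fromBlocks_smul, fromBlocks_smul, fromBlocks_add,
      hPdef, hP'def]
    simp
  -- C * N = Q * C
  have hCN : C * N = Q * C := by
    rw [hNdef, hQsmul]
    unfold calA
    rw [← hCdef, ← hCfdef]
    rw [Matrix.mul_sub, Matrix.mul_sub]
    rw [Matrix.mul_smul, Matrix.mul_one]
    rw [Matrix.mul_smul, hCJΩ, smul_zero]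
    rw [Matrix.mul_smul, ← Matrix.mul_assoc, hCCf]
    rw [Matrix.add_mul, Matrix.smul_mul, Matrix.smul_mul, Matrix.one_mul]
    simp only [zero_sub, sub_neg_eq_add]
  -- units
  have hPd : IsUnit P.det := (Matrix.isUnit_iff_isUnit_det P).mp hP
  have hP'd : IsUnit P'.det := (Matrix.isUnit_iff_isUnit_det P').mp hP'
  have hQd : IsUnit Q.det := by
    rw [hQdef, det_fromBlocks_zero₂₁]
    exact hPd.mul hP'd
  have hNd : IsUnit N.det := (Matrix.isUnit_iff_isUnit_det N).mp hN
  -- C * N⁻¹ = Q⁻¹ * C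
  have hCNinv : C * N⁻¹ = Q⁻¹ * C := by
    have hA : Q⁻¹ * (Q * C) * N⁻¹ = C * N⁻¹ := by
      rw [← Matrix.mul_assoc Q⁻¹ Q C, Matrix.nonsing_inv_mul Q hQd, Matrix.one_mul]
    have hB : Q⁻¹ * (C * N) * N⁻¹ = Q⁻¹ * C := by
      rw [← Matrix.mul_assoc Q⁻¹ C N, Matrix.mul_assoc (Q⁻¹ * C) N N⁻¹,
        Matrix.mul_nonsing_inv N hNd, Matrix.mul_one]
    calc C * N⁻¹ = Q⁻¹ * (Q * C) * N⁻¹ := hA.symm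
      _ = Q⁻¹ * (C * N) * N⁻¹ := by rw [hCN]
      _ = Q⁻¹ * C := hB
  -- Xi = Q⁻¹ * (s•1 - ½•Kb)
  have hXi : Xi Cm Cp Om (0 : Matrix (Fin n) (Fin n) ℂ) s
      = Q⁻¹ * (s • (1 : Matrix (Fin m ⊕ Fin m) (Fin m ⊕ Fin m) ℂ) - (1/2 : ℂ) • Kb) := by
    unfold Xi
    rw [← hCdef, ← hCfdef, ← hNdef, hCNinv, Matrix.mul_assoc, hCCf]
    have hQK : Q - Kb = s • (1 : Matrix (Fin m ⊕ Fin m) (Fin m ⊕ Fin m) ℂ) - (1/2 : ℂ) • Kb := by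
      rw [hQsmul]; module
    rw [← hQK, Matrix.mul_sub, Matrix.nonsing_inv_mul Q hQd]
  -- commutation: Q⁻¹ * X = X * Q⁻¹ where X = s•1 - ½Kb
  set X : Matrix (Fin m ⊕ Fin m) (Fin m ⊕ Fin m) ℂ :=
    s • (1 : Matrix (Fin m ⊕ Fin m) (Fin m ⊕ Fin m) ℂ) - (1/2 : ℂ) • Kb with hXdef
  have hcomm : Q * X = X * Q := by
    rw [hQsmul, hXdef]
    simp only [Matrix.add_mul, Matrix.mul_add, Matrix.mul_sub, Matrix.sub_mul,
      Matrix.smul_mul, Matrix.mul_smul, Matrix.one_mul, Matrix.mul_one]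
    module
  have hQinvX : Q⁻¹ * X = X * Q⁻¹ := by
    have hA : Q⁻¹ * (Q * X) * Q⁻¹ = X * Q⁻¹ := by
      rw [← Matrix.mul_assoc Q⁻¹ Q X, Matrix.nonsing_inv_mul Q hQd, Matrix.one_mul]
    rw [← hA, hcomm, ← Matrix.mul_assoc Q⁻¹ X Q, Matrix.mul_assoc (Q⁻¹ * X) Q Q⁻¹,
      Matrix.mul_nonsing_inv Q hQd, Matrix.mul_one]
  -- target equals X * Q⁻¹
  have hT : fromBlocks
        ((s • (1 : Matrix (Fin m) (Fin m) ℂ) - (1/2 : ℂ) • K) * P⁻¹) 0 0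
        ((s • (1 : Matrix (Fin m) (Fin m) ℂ) - (1/2 : ℂ) • K') * P'⁻¹)
      = X * Q⁻¹ := by
    have hTQ : fromBlocks
          ((s • (1 : Matrix (Fin m) (Fin m) ℂ) - (1/2 : ℂ) • K) * P⁻¹) 0 0
          ((s • (1 : Matrix (Fin m) (Fin m) ℂ) - (1/2 : ℂ) • K') * P'⁻¹) * Q = X := by
      rw [hQdef, fromBlocks_multiply]
      rw [Matrix.mul_assoc _ P⁻¹ P, Matrix.nonsing_inv_mul P hPd,
        Matrix.mul_assoc _ P'⁻¹ P', Matrix.nonsing_inv_mul P' hP'd]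
      rw [hXdef, hKbdef, ← fromBlocks_one, fromBlocks_smul, fromBlocks_smul,
        fromBlocks_sub']
      simp
    calc fromBlocks _ 0 0 _
        = fromBlocks
          ((s • (1 : Matrix (Fin m) (Fin m) ℂ) - (1/2 : ℂ) • K) * P⁻¹) 0 0
          ((s • (1 : Matrix (Fin m) (Fin m) ℂ) - (1/2 : ℂ) • K') * P'⁻¹) * (Q * Q⁻¹) := by
          rw [Matrix.mul_nonsing_inv Q hQd, Matrix.mul_one]
      _ = X * Q⁻¹ := by rw [← Matrix.mul_assoc, hTQ]
  rw [hXi, hQinvX, ← hT]
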